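/- arXiv:2309.16094 — 2 statements merged into one kernel-verified Lean document; each statement's English description precedes it below -/
import Mathlib

section
/- Let y, z ∈ ℂ with |y| < 1 and |z| < 1. Then the infinite product over all pairs of positive integers (j,k) with j ≤ k and gcd(j,k) = 1 of (1/(1 − y^j z^k))^(1/j) equals (1/(1 − yz))^(1/(1 − z)). -/
/-!
Taking logarithms, the factor at a primitive pair `(j, k)` contributes
`-log (1 - y^j z^k) / j = ∑_{m ≥ 1} y^{jm} z^{km} / (jm)`. Since every pair `1 ≤ a ≤ b` is
uniquely `(jm, km)` with `(j, k)` primitive, the total is `∑_{1 ≤ a ≤ b} y^a z^b / a`, which,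
summing first over `b = a + d`, equals `∑_a (yz)^a / (a (1 - z)) = -log (1 - yz) / (1 - z)`.
-/

open Complex

lemma hasSum_pnat_pow_div_eq_neg_log {w : ℂ} (hw : ‖w‖ < 1) :
    HasSum (fun m : ℕ+ => w ^ (m : ℕ) / (m : ℕ)) (-log (1 - w)) := by
  refine (PNat.coe_injective.hasSum_iff fun n hn => ?_).2 (hasSum_taylorSeries_neg_log hw)
  obtain rfl : n = 0 := by
    by_contra h0
    exact hn ⟨⟨n, Nat.pos_of_ne_zero h0⟩, rfl⟩
  simp

lemma one_div_one_sub_cpow_eq_exp {w : ℂ} (hw : ‖w‖ < 1) (s : ℂ) :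
    (1 / (1 - w)) ^ s = exp (-log (1 - w) * s) := by
  have hslit : 1 - w ∈ slitPlane := by
    simpa [sub_eq_add_neg] using mem_slitPlane_of_norm_lt_one (z := -w) (by simpa using hw)
  rw [cpow_def_of_ne_zero (one_div_ne_zero (slitPlane_ne_zero hslit)), one_div,
    log_inv _ (slitPlane_arg_ne_pi hslit)]

lemma norm_pow_mul_pow_lt_one {y z : ℂ} (hy : ‖y‖ < 1) (hz : ‖z‖ < 1) {j : ℕ} (hj : j ≠ 0)
    (k : ℕ) : ‖y ^ j * z ^ k‖ < 1 := by
  rw [norm_mul, norm_pow, norm_pow]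
  exact mul_lt_one_of_nonneg_of_lt_one_left (by positivity) (pow_lt_one₀ (norm_nonneg y) hy hj)
    (pow_le_one₀ (norm_nonneg z) hz.le)

abbrev PosLePairs : Type := {q : ℕ × ℕ // 0 < q.1 ∧ q.1 ≤ q.2}

abbrev CoprimePosLePairs : Type :=
  {p : ℕ × ℕ // 0 < p.1 ∧ 0 < p.2 ∧ p.1 ≤ p.2 ∧ Nat.gcd p.1 p.2 = 1}

def PosLePairs.equivPNatProdNat : ℕ+ × ℕ ≃ PosLePairs where
  toFun x := ⟨(x.1, x.1 + x.2), x.1.pos, Nat.le_add_right _ _⟩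
  invFun q := (⟨q.1.1, q.2.1⟩, q.1.2 - q.1.1)
  left_inv _ := Prod.ext rfl (Nat.add_sub_cancel_left ..)
  right_inv q := Subtype.ext (Prod.ext rfl (Nat.add_sub_cancel' q.2.2))

def CoprimePosLePairs.prodPNatEquiv : CoprimePosLePairs × ℕ+ ≃ PosLePairs where
  toFun x := ⟨(x.1.1.1 * x.2, x.1.1.2 * x.2), Nat.mul_pos x.1.2.1 x.2.pos,
    Nat.mul_le_mul_right _ x.1.2.2.2.1⟩
  invFun q :=
    have hg : 0 < Nat.gcd q.1.1 q.1.2 := Nat.gcd_pos_of_pos_left _ q.2.1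
    (⟨(q.1.1 / Nat.gcd q.1.1 q.1.2, q.1.2 / Nat.gcd q.1.1 q.1.2),
      Nat.div_pos (Nat.le_of_dvd q.2.1 (Nat.gcd_dvd_left _ _)) hg,
      Nat.div_pos (Nat.le_of_dvd (q.2.1.trans_le q.2.2) (Nat.gcd_dvd_right _ _)) hg,
      Nat.div_le_div_right q.2.2, Nat.coprime_div_gcd_div_gcd hg⟩,
     ⟨Nat.gcd q.1.1 q.1.2, hg⟩)
  left_inv := by
    rintro ⟨⟨⟨j, k⟩, hj, hk, hjk, hcop⟩, m⟩
    have hgcd : Nat.gcd (j * m) (k * m) = m := by rw [Nat.gcd_mul_right, hcop, one_mul]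
    refine Prod.ext (Subtype.ext ?_) (Subtype.ext ?_) <;> simp only [hgcd]
    · exact Prod.ext (Nat.mul_div_cancel _ m.pos) (Nat.mul_div_cancel _ m.pos)
    · rfl
  right_inv q := Subtype.ext (Prod.ext (Nat.div_mul_cancel (Nat.gcd_dvd_left _ _))
    (Nat.div_mul_cancel (Nat.gcd_dvd_right _ _)))

section

variable {y z : ℂ}

lemma summable_pow_mul_pow_div_fst (hy : ‖y‖ < 1) (hz : ‖z‖ < 1) :
    Summable (fun q : ℕ × ℕ => y ^ q.1 * z ^ q.2 / q.1) := by
  have hgeom := (summable_geometric_of_lt_one (norm_nonneg y) hy).mul_of_nonneg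
    (summable_geometric_of_lt_one (norm_nonneg z) hz) (fun n => by positivity)
    (fun n => by positivity)
  refine hgeom.of_norm_bounded fun q => ?_
  rw [norm_div, norm_mul, norm_pow, norm_pow, norm_natCast]
  rcases Nat.eq_zero_or_pos q.1 with h0 | hpos
  · simp [h0]
  · exact div_le_self (by positivity) (by exact_mod_cast hpos)

lemma hasSum_posLePairs_pow_mul_pow_div (hy : ‖y‖ < 1) (hz : ‖z‖ < 1) :
    HasSum (fun q : PosLePairs => y ^ q.1.1 * z ^ q.1.2 / q.1.1)
      (-log (1 - y * z) * (1 / (1 - z))) := by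
  set F := fun q : PosLePairs => y ^ q.1.1 * z ^ q.1.2 / q.1.1
  have hyz : ‖y * z‖ < 1 := by simpa using norm_pow_mul_pow_lt_one hy hz one_ne_zero 1
  have hfiber (a : ℕ+) : HasSum (fun d => F (PosLePairs.equivPNatProdNat (a, d)))
      ((y * z) ^ (a : ℕ) / (a : ℕ) * (1 / (1 - z))) := by
    rw [one_div]
    refine ((hasSum_geometric_of_norm_lt_one hz).mul_left ((y * z) ^ (a : ℕ) / (a : ℕ))).congr_fun
      fun d => ?_
    show y ^ (a : ℕ) * z ^ ((a : ℕ) + d) / (a : ℕ) = _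
    rw [pow_add, mul_pow]
    ring
  have hF : HasSum F (∑' q, F q) := ((summable_pow_mul_pow_div_fst hy hz).subtype _).hasSum
  have htotal := (PosLePairs.equivPNatProdNat.hasSum_iff.2 hF).prod_fiberwise hfiber
  rwa [((hasSum_pnat_pow_div_eq_neg_log hyz).mul_right _).unique htotal]

lemma hasSum_coprimePosLePairs_neg_log_div (hy : ‖y‖ < 1) (hz : ‖z‖ < 1) :
    HasSum (fun p : CoprimePosLePairs => -log (1 - y ^ p.1.1 * z ^ p.1.2) * (1 / (p.1.1 : ℂ)))
      (-log (1 - y * z) * (1 / (1 - z))) := by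
  refine (CoprimePosLePairs.prodPNatEquiv.hasSum_iff.2
    (hasSum_posLePairs_pow_mul_pow_div hy hz)).prod_fiberwise fun p => ?_
  have hj : (p.1.1 : ℂ) ≠ 0 := Nat.cast_ne_zero.2 p.2.1.ne'
  refine ((hasSum_pnat_pow_div_eq_neg_log
    (norm_pow_mul_pow_lt_one hy hz p.2.1.ne' p.1.2)).mul_right (1 / (p.1.1 : ℂ))).congr_fun
    fun m => ?_
  have hm : (m : ℂ) ≠ 0 := Nat.cast_ne_zero.2 m.ne_zero
  simp only [Function.comp_apply, CoprimePosLePairs.prodPNatEquiv, Equiv.coe_fn_mk]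
  push_cast
  rw [pow_mul, pow_mul, mul_pow]
  field_simp

end

theorem stmt_4 (y z : ℂ) (hy : ‖y‖ < 1) (hz : ‖z‖ < 1) :
    (∏' p : {p : ℕ × ℕ // 0 < p.1 ∧ 0 < p.2 ∧ p.1 ≤ p.2 ∧ Nat.gcd p.1 p.2 = 1},
      (1 / (1 - y ^ p.1.1 * z ^ p.1.2)) ^ (1 / (p.1.1 : ℂ))) =
    (1 / (1 - y * z)) ^ (1 / (1 - z)) := by
  have hyz : ‖y * z‖ < 1 := by simpa using norm_pow_mul_pow_lt_one hy hz one_ne_zero 1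
  rw [one_div_one_sub_cpow_eq_exp hyz]
  refine HasProd.tprod_eq ?_
  convert (hasSum_coprimePosLePairs_neg_log_div hy hz).cexp with p
  exact one_div_one_sub_cpow_eq_exp (norm_pow_mul_pow_lt_one hy hz p.2.1.ne' p.1.2) _
end

section
/- Let x, y, z ∈ ℂ with |x| < 1, |y| < 1, |z| < 1, x ≠ 1 and y ≠ 1. Then the infinite product over all triples of integers (a,b,c) with a ≥ 0, b ≥ 0, c ≥ 1, a < c, b < c and gcd(a,b,c) = 1 of (1/(1 − x^a y^b z^c))^(1/c) equals ( (1 − xz)(1 − yz) / ((1 − z)(1 − xyz)) )^( 1/((1 − x)(1 − y)) ). -/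
/-!
Taking principal logarithms, the factor of `p = (a, b, c)` is `exp (-log (1 - m p) / c)` with
`m p = x ^ a * y ^ b * z ^ c`, and `-log (1 - m p) / c = ∑_{k ≥ 1} m (k • p) / (k c)`. As `(p, k)`
runs over primitive triples and `k ≥ 1`, `k • p` runs exactly once over all `(a, b, c)` with
`a, b < c`, so the exponent is `∑_{c ≥ 1} (z ^ c / c) ∑_{a, b < c} x ^ a y ^ b`, a combination of
four logarithmic series divided by `(1 - x) (1 - y)`. That combination is the principal logarithm
of the base on the right: as `z` moves in the unit disc the base never meets `(-∞, 0]`, so the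
imaginary part of the combination, which vanishes at `z = 0`, never reaches `±π`.
-/

open Complex Set

theorem Complex.log_exp_of_isPreconnected {X : Type*} [TopologicalSpace X] {S : Set X}
    (hS : IsPreconnected S) {f : X → ℂ} (hf : ContinuousOn f S)
    (hslit : ∀ s ∈ S, exp (f s) ∈ slitPlane) {s₀ : X} (hs₀ : s₀ ∈ S)
    (h₀ : (f s₀).im ∈ Ioo (-Real.pi) Real.pi) {s : X} (hs : s ∈ S) :
    log (exp (f s)) = f s := by
  have hne : ∀ t ∈ S, (f t).im ≠ Real.pi ∧ (f t).im ≠ -Real.pi := by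
    intro t ht
    have := hslit t ht
    constructor <;> intro h <;>
      simp only [mem_slitPlane_iff, exp_re, exp_im, h, Real.cos_neg, Real.sin_neg, Real.cos_pi,
        Real.sin_pi, neg_zero, mul_neg, mul_one, mul_zero, Left.neg_pos_iff, ne_eq,
        not_true_eq_false, or_false] at this <;>
      exact (Real.exp_pos _).not_gt this
  have hcont : ContinuousOn (fun t => (f t).im) S := continuous_im.comp_continuousOn hf
  refine log_exp ?_ ?_
  · by_contra! h
    obtain ⟨t, ht, hπ⟩ := hS.intermediate_value hs hs₀ hcont ⟨h, h₀.1.le⟩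
    exact (hne t ht).2 hπ
  · by_contra! h
    obtain ⟨t, ht, hπ⟩ := hS.intermediate_value hs₀ hs hcont ⟨h₀.2.le, h.le⟩
    exact (hne t ht).1 hπ

theorem norm_mul_le_one_of_le {R : Type*} [SeminormedRing R] {a b : R} (ha : ‖a‖ ≤ 1)
    (hb : ‖b‖ ≤ 1) : ‖a * b‖ ≤ 1 :=
  (norm_mul_le a b).trans (mul_le_one₀ ha (norm_nonneg b) hb)

theorem norm_mul_lt_one_of_le_of_lt {R : Type*} [SeminormedRing R] {a w : R} (ha : ‖a‖ ≤ 1)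
    (hw : ‖w‖ < 1) : ‖a * w‖ < 1 :=
  (norm_mul_le a w).trans_lt (mul_lt_one_of_nonneg_of_lt_one_right ha (norm_nonneg w) hw)

theorem one_sub_mem_slitPlane {w : ℂ} (hw : ‖w‖ < 1) : 1 - w ∈ slitPlane := by
  rw [sub_eq_add_neg]
  exact mem_slitPlane_of_norm_lt_one (by rwa [norm_neg])

theorem normSq_lt_one_of_norm_lt_one {w : ℂ} (hw : ‖w‖ < 1) : normSq w < 1 := by
  rw [normSq_eq_norm_sq]
  exact pow_lt_one₀ (norm_nonneg w) hw two_ne_zero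

theorem one_sub_mul_one_sub_add_ofReal_mul_ne_zero {x y z : ℂ} (hx : ‖x‖ ≤ 1) (hy : ‖y‖ ≤ 1)
    (hz : ‖z‖ < 1) {t : ℝ} (ht : 0 ≤ t) :
    (1 - x * z) * (1 - y * z) + t * ((1 - z) * (1 - x * y * z)) ≠ 0 := by
  intro h
  set A := (1 - y * z) + t * (1 - z)
  set B := (1 - y * z) + t * y * (1 - z)
  have hAB : A = x * (z * B) := by linear_combination h
  -- `A = x z B` is impossible: `‖z B‖ < ‖A‖` by this factorisation
  have hid : normSq A - normSq (z * B) = (1 + t) *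
      (normSq (1 - y * z) * (1 - normSq z) + t * (normSq (1 - z) * (1 - normSq (y * z)))) := by
    simp only [A, B, normSq_apply, mul_re, mul_im, sub_re, sub_im, add_re, add_im, one_re, one_im,
      ofReal_re, ofReal_im]
    ring
  have hyz := norm_mul_lt_one_of_le_of_lt hy hz
  have h1 : 0 < normSq (1 - y * z) := normSq_pos.2 (sub_ne_zero.2 (by rintro h; simp [← h] at hyz))
  have h2 := normSq_lt_one_of_norm_lt_one hz
  have h3 := normSq_lt_one_of_norm_lt_one hyz
  have hgt : normSq (z * B) < normSq A := by
    have : 0 < normSq (1 - y * z) * (1 - normSq z) +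
        t * (normSq (1 - z) * (1 - normSq (y * z))) := by
      have := normSq_nonneg (1 - z)
      positivity [sub_pos.2 h2, sub_pos.2 h3]
    nlinarith
  have hle : normSq A ≤ normSq (z * B) := by
    rw [hAB, normSq_mul]
    refine mul_le_of_le_one_left (normSq_nonneg _) ?_
    rw [normSq_eq_norm_sq]
    exact pow_le_one₀ (norm_nonneg x) hx
  linarith

theorem one_sub_mul_one_sub_div_mem_slitPlane {x y z : ℂ} (hx : ‖x‖ ≤ 1) (hy : ‖y‖ ≤ 1)
    (hz : ‖z‖ < 1) : (1 - x * z) * (1 - y * z) / ((1 - z) * (1 - x * y * z)) ∈ slitPlane := by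
  set Q := (1 - x * z) * (1 - y * z) / ((1 - z) * (1 - x * y * z))
  have hxy := norm_mul_le_one_of_le hx hy
  have hden : (1 - z) * (1 - x * y * z) ≠ 0 :=
    mul_ne_zero (slitPlane_ne_zero (one_sub_mem_slitPlane hz))
      (slitPlane_ne_zero (one_sub_mem_slitPlane (norm_mul_lt_one_of_le_of_lt hxy hz)))
  rw [mem_slitPlane_iff_not_le_zero, le_def]
  rintro ⟨hre, him⟩
  have hQ : Q = (Q.re : ℂ) := Complex.ext rfl (by simpa using him)
  refine one_sub_mul_one_sub_add_ofReal_mul_ne_zero hx hy hz (neg_nonneg.2 hre) ?_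
  push_cast
  linear_combination (div_mul_cancel₀ ((1 - x * z) * (1 - y * z)) hden).symm +
    (1 - z) * (1 - x * y * z) * hQ

theorem log_one_sub_mul_one_sub_div {x y z : ℂ} (hx : ‖x‖ ≤ 1) (hy : ‖y‖ ≤ 1) (hz : ‖z‖ < 1) :
    log ((1 - x * z) * (1 - y * z) / ((1 - z) * (1 - x * y * z))) =
      log (1 - x * z) + log (1 - y * z) - log (1 - z) - log (1 - x * y * z) := by
  have hxy := norm_mul_le_one_of_le hx hy
  set f : ℂ → ℂ := fun w ↦ log (1 - x * w) + log (1 - y * w) - log (1 - w) - log (1 - x * y * w)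
  have hslit : ∀ {a : ℂ}, ‖a‖ ≤ 1 → ∀ w ∈ Metric.ball (0 : ℂ) 1, 1 - a * w ∈ slitPlane :=
    fun ha w hw ↦ one_sub_mem_slitPlane (norm_mul_lt_one_of_le_of_lt ha (mem_ball_zero_iff.1 hw))
  have hexp : ∀ w ∈ Metric.ball (0 : ℂ) 1,
      exp (f w) = (1 - x * w) * (1 - y * w) / ((1 - w) * (1 - x * y * w)) := by
    intro w hw
    have h1 := one_mul w ▸ hslit norm_one.le w hw
    simp only [f, exp_sub, exp_add, exp_log (slitPlane_ne_zero (hslit hx w hw)),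
      exp_log (slitPlane_ne_zero (hslit hy w hw)), exp_log (slitPlane_ne_zero h1),
      exp_log (slitPlane_ne_zero (hslit hxy w hw)), div_div]
  have hcont : ContinuousOn f (Metric.ball 0 1) := by
    have hlog : ∀ {a : ℂ}, ‖a‖ ≤ 1 → ContinuousOn (fun w ↦ log (1 - a * w)) (Metric.ball 0 1) :=
      fun ha ↦ (continuousOn_const.sub (continuousOn_const.mul continuousOn_id)).clog (hslit ha)
    have h1 : ContinuousOn (fun w ↦ log (1 - w)) (Metric.ball 0 1) := by
      simpa using hlog norm_one.le
    exact (((hlog hx).add (hlog hy)).sub h1).sub (hlog hxy)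
  have hz' : z ∈ Metric.ball (0 : ℂ) 1 := mem_ball_zero_iff.2 hz
  have key := log_exp_of_isPreconnected (convex_ball (0 : ℂ) 1).isPreconnected hcont
    (fun w hw ↦ hexp w hw ▸ one_sub_mul_one_sub_div_mem_slitPlane hx hy (mem_ball_zero_iff.1 hw))
    (Metric.mem_ball_self one_pos) (by simp [f, Real.pi_pos]) hz'
  rwa [hexp z hz'] at key

theorem hasSum_one_sub_pow_mul_one_sub_pow {x y z : ℂ} (hx : ‖x‖ ≤ 1) (hy : ‖y‖ ≤ 1)
    (hz : ‖z‖ < 1) :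
    HasSum (fun n : ℕ ↦ (1 - x ^ (n + 1)) * (1 - y ^ (n + 1)) * (z ^ (n + 1) / (n + 1)))
      (log (1 - x * z) + log (1 - y * z) - log (1 - z) - log (1 - x * y * z)) := by
  have hxy := norm_mul_le_one_of_le hx hy
  have := (((hasSum_taylorSeries_neg_log' hz).sub
    (hasSum_taylorSeries_neg_log' (norm_mul_lt_one_of_le_of_lt hx hz))).sub
    (hasSum_taylorSeries_neg_log' (norm_mul_lt_one_of_le_of_lt hy hz))).add
    (hasSum_taylorSeries_neg_log' (norm_mul_lt_one_of_le_of_lt hxy hz))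
  rw [show log (1 - x * z) + log (1 - y * z) - log (1 - z) - log (1 - x * y * z) =
    -log (1 - z) - -log (1 - x * z) - -log (1 - y * z) + -log (1 - x * y * z) by ring]
  refine this.congr_fun fun n ↦ ?_
  simp only [mul_pow]
  ring

abbrev BoxTriple := {q : ℕ × ℕ × ℕ // q.1 < q.2.2 ∧ q.2.1 < q.2.2}

def boxTripleEquivSigma : BoxTriple ≃ Σ c : ℕ, Fin (c + 1) × Fin (c + 1) where
  toFun q := ⟨q.1.2.2 - 1, ⟨q.1.1, by omega⟩, ⟨q.1.2.1, by omega⟩⟩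
  invFun σ := ⟨(σ.2.1, σ.2.2, σ.1 + 1), σ.2.1.isLt, σ.2.2.isLt⟩
  left_inv q := by
    ext <;> simp only
    omega
  right_inv _ := rfl

theorem summable_boxTriple {x y z : ℂ} (hx : ‖x‖ < 1) (hy : ‖y‖ < 1) (hz : ‖z‖ < 1) :
    Summable fun q : BoxTriple ↦ x ^ q.1.1 * y ^ q.1.2.1 * z ^ q.1.2.2 / (q.1.2.2 : ℂ) := by
  have hgeom : Summable fun q : ℕ × ℕ × ℕ ↦ ‖x‖ ^ q.1 * (‖y‖ ^ q.2.1 * ‖z‖ ^ q.2.2) :=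
    (summable_geometric_of_lt_one (norm_nonneg x) hx).mul_of_nonneg
      ((summable_geometric_of_lt_one (norm_nonneg y) hy).mul_of_nonneg
        (summable_geometric_of_lt_one (norm_nonneg z) hz) (fun _ ↦ by positivity)
        (fun _ ↦ by positivity))
      (fun _ ↦ by positivity) (fun _ ↦ by positivity)
  refine (hgeom.subtype _).of_norm_bounded fun q ↦ ?_
  have hc : (1 : ℝ) ≤ ‖(q.1.2.2 : ℂ)‖ := by
    rw [norm_natCast]
    exact_mod_cast (Nat.zero_le _).trans_lt q.2.1
  simp only [Function.comp_apply, norm_div, norm_mul, norm_pow, ← mul_assoc]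
  exact div_le_self (by positivity) hc

theorem hasSum_boxTriple {x y z : ℂ} (hx : ‖x‖ < 1) (hy : ‖y‖ < 1) (hz : ‖z‖ < 1) :
    HasSum (fun q : BoxTriple ↦ x ^ q.1.1 * y ^ q.1.2.1 * z ^ q.1.2.2 / (q.1.2.2 : ℂ))
      ((log (1 - x * z) + log (1 - y * z) - log (1 - z) - log (1 - x * y * z)) /
        ((1 - x) * (1 - y))) := by
  have hx1 : 1 - x ≠ 0 := slitPlane_ne_zero (one_sub_mem_slitPlane hx)
  have hy1 : 1 - y ≠ 0 := slitPlane_ne_zero (one_sub_mem_slitPlane hy)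
  rw [← boxTripleEquivSigma.symm.hasSum_iff]
  refine ((hasSum_one_sub_pow_mul_one_sub_pow hx.le hy.le hz).div_const _).sigma_of_hasSum
    (fun c ↦ ?_) (boxTripleEquivSigma.symm.summable_iff.2 (summable_boxTriple hx hy hz))
  convert hasSum_fintype _ using 1
  calc (1 - x ^ (c + 1)) * (1 - y ^ (c + 1)) * (z ^ (c + 1) / (c + 1)) / ((1 - x) * (1 - y))
      = (∑ a : Fin (c + 1), x ^ (a : ℕ)) * (∑ b : Fin (c + 1), y ^ (b : ℕ)) *
          (z ^ (c + 1) / (c + 1)) := by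
        rw [Fin.sum_univ_eq_sum_range (x ^ ·), Fin.sum_univ_eq_sum_range (y ^ ·),
          ← mul_neg_geom_sum x, ← mul_neg_geom_sum y]
        field_simp
    _ = _ := by
        rw [Fintype.sum_mul_sum, Finset.sum_mul, Fintype.sum_prod_type]
        simp [boxTripleEquivSigma, Finset.sum_mul, mul_div_assoc]

abbrev PrimitiveBoxTriple := {p : ℕ × ℕ × ℕ // 1 ≤ p.2.2 ∧ p.1 < p.2.2 ∧ p.2.1 < p.2.2 ∧
  Nat.gcd p.1 (Nat.gcd p.2.1 p.2.2) = 1}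

theorem gcd_div_gcd_three_eq_one {a b c : ℕ} (hc : 0 < c) :
    Nat.gcd (a / Nat.gcd a (Nat.gcd b c)) (Nat.gcd (b / Nat.gcd a (Nat.gcd b c))
      (c / Nat.gcd a (Nat.gcd b c))) = 1 := by
  set g := Nat.gcd a (Nat.gcd b c)
  have hgb : g ∣ Nat.gcd b c := Nat.gcd_dvd_right _ _
  rw [Nat.gcd_div (hgb.trans (Nat.gcd_dvd_left _ _)) (hgb.trans (Nat.gcd_dvd_right _ _)),
    Nat.gcd_div (Nat.gcd_dvd_left _ _) hgb,
    Nat.div_self (Nat.gcd_pos_of_pos_right _ (Nat.gcd_pos_of_pos_right _ hc))]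

def primitiveMulEquiv : PrimitiveBoxTriple × ℕ ≃ BoxTriple where
  toFun pk := ⟨((pk.2 + 1) * pk.1.1.1, (pk.2 + 1) * pk.1.1.2.1, (pk.2 + 1) * pk.1.1.2.2),
    Nat.mul_lt_mul_of_pos_left pk.1.2.2.1 pk.2.succ_pos,
    Nat.mul_lt_mul_of_pos_left pk.1.2.2.2.1 pk.2.succ_pos⟩
  invFun q :=
    let g := Nat.gcd q.1.1 (Nat.gcd q.1.2.1 q.1.2.2)
    have hg : g ∣ q.1.2.2 := (Nat.gcd_dvd_right _ _).trans (Nat.gcd_dvd_right _ _)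
    have hc : 0 < q.1.2.2 := (Nat.zero_le _).trans_lt q.2.1
    (⟨(q.1.1 / g, q.1.2.1 / g, q.1.2.2 / g),
      Nat.div_pos (Nat.le_of_dvd hc hg) (Nat.pos_of_dvd_of_pos hg hc),
      Nat.div_lt_div_of_lt_of_dvd hg q.2.1, Nat.div_lt_div_of_lt_of_dvd hg q.2.2,
      gcd_div_gcd_three_eq_one hc⟩, g - 1)
  left_inv := by
    rintro ⟨⟨⟨a, b, c⟩, hc, -, -, hg⟩, k⟩
    have hgcd : Nat.gcd ((k + 1) * a) (Nat.gcd ((k + 1) * b) ((k + 1) * c)) = k + 1 := by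
      rw [Nat.gcd_mul_left, Nat.gcd_mul_left, hg, mul_one]
    simp only [hgcd, Nat.add_sub_cancel, Nat.mul_div_cancel_left _ k.succ_pos]
  right_inv := by
    rintro ⟨⟨a, b, c⟩, -, hbc⟩
    have hg : 0 < Nat.gcd a (Nat.gcd b c) :=
      Nat.gcd_pos_of_pos_right _ (Nat.gcd_pos_of_pos_right _ ((Nat.zero_le _).trans_lt hbc))
    ext <;> simp only [Nat.sub_add_cancel hg]
    exacts [Nat.mul_div_cancel' (Nat.gcd_dvd_left _ _),
      Nat.mul_div_cancel' ((Nat.gcd_dvd_right _ _).trans (Nat.gcd_dvd_left _ _)),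
      Nat.mul_div_cancel' ((Nat.gcd_dvd_right _ _).trans (Nat.gcd_dvd_right _ _))]

theorem norm_pow_mul_pow_mul_pow_lt_one {x y z : ℂ} (hx : ‖x‖ ≤ 1) (hy : ‖y‖ ≤ 1) (hz : ‖z‖ < 1)
    (a b : ℕ) {c : ℕ} (hc : c ≠ 0) : ‖x ^ a * y ^ b * z ^ c‖ < 1 := by
  rw [norm_mul, norm_mul, norm_pow, norm_pow, norm_pow]
  exact mul_lt_one_of_nonneg_of_lt_one_right
    (mul_le_one₀ (pow_le_one₀ (norm_nonneg x) hx) (by positivity) (pow_le_one₀ (norm_nonneg y) hy))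
    (by positivity) (pow_lt_one₀ (norm_nonneg z) hz hc)

theorem hasSum_primitiveBoxTriple {x y z : ℂ} (hx : ‖x‖ < 1) (hy : ‖y‖ < 1) (hz : ‖z‖ < 1) :
    HasSum (fun p : PrimitiveBoxTriple ↦
        -log (1 - x ^ p.1.1 * y ^ p.1.2.1 * z ^ p.1.2.2) / (p.1.2.2 : ℂ))
      ((log (1 - x * z) + log (1 - y * z) - log (1 - z) - log (1 - x * y * z)) /
        ((1 - x) * (1 - y))) := by
  refine (primitiveMulEquiv.hasSum_iff.2 (hasSum_boxTriple hx hy hz)).prod_fiberwise fun p ↦ ?_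
  refine ((hasSum_taylorSeries_neg_log' (norm_pow_mul_pow_mul_pow_lt_one hx.le hy.le hz _ _
    (Nat.one_le_iff_ne_zero.1 p.2.1))).div_const (p.1.2.2 : ℂ)).congr_fun fun k ↦ ?_
  simp only [Function.comp_apply, primitiveMulEquiv, Equiv.coe_fn_mk, pow_mul, mul_pow]
  push_cast
  field_simp
  ring

theorem stmt_13_general (x y z : ℂ) (hx : ‖x‖ < 1) (hy : ‖y‖ < 1) (hz : ‖z‖ < 1) :
    (∏' p : {p : ℕ × ℕ × ℕ // 1 ≤ p.2.2 ∧ p.1 < p.2.2 ∧ p.2.1 < p.2.2 ∧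
        Nat.gcd p.1 (Nat.gcd p.2.1 p.2.2) = 1},
      (1 / (1 - x ^ p.1.1 * y ^ p.1.2.1 * z ^ p.1.2.2)) ^ (1 / (p.1.2.2 : ℂ))) =
    ((1 - x * z) * (1 - y * z) / ((1 - z) * (1 - x * y * z))) ^
      (1 / ((1 - x) * (1 - y))) := by
  have hfactor (p : PrimitiveBoxTriple) :
      (1 / (1 - x ^ p.1.1 * y ^ p.1.2.1 * z ^ p.1.2.2)) ^ (1 / (p.1.2.2 : ℂ)) =
        exp (-log (1 - x ^ p.1.1 * y ^ p.1.2.1 * z ^ p.1.2.2) / (p.1.2.2 : ℂ)) := by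
    have hslit := one_sub_mem_slitPlane (norm_pow_mul_pow_mul_pow_lt_one hx.le hy.le hz
      p.1.1 p.1.2.1 (Nat.one_le_iff_ne_zero.1 p.2.1))
    rw [cpow_def_of_ne_zero (one_div_ne_zero (slitPlane_ne_zero hslit)), one_div,
      log_inv _ (slitPlane_arg_ne_pi hslit), mul_one_div]
  have hQ := one_sub_mul_one_sub_div_mem_slitPlane hx.le hy.le hz
  rw [tprod_congr hfactor]
  refine (hasSum_primitiveBoxTriple hx hy hz).cexp.tprod_eq.trans ?_
  rw [cpow_def_of_ne_zero (slitPlane_ne_zero hQ), log_one_sub_mul_one_sub_div hx.le hy.le hz,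
    mul_one_div]

theorem stmt_13 (x y z : ℂ) (hx : ‖x‖ < 1) (hy : ‖y‖ < 1) (hz : ‖z‖ < 1)
    (hx1 : x ≠ 1) (hy1 : y ≠ 1) :
    (∏' p : {p : ℕ × ℕ × ℕ // 1 ≤ p.2.2 ∧ p.1 < p.2.2 ∧ p.2.1 < p.2.2 ∧
        Nat.gcd p.1 (Nat.gcd p.2.1 p.2.2) = 1},
      (1 / (1 - x ^ p.1.1 * y ^ p.1.2.1 * z ^ p.1.2.2)) ^ (1 / (p.1.2.2 : ℂ))) =
    ((1 - x * z) * (1 - y * z) / ((1 - z) * (1 - x * y * z))) ^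
      (1 / ((1 - x) * (1 - y))) :=
  stmt_13_general x y z hx hy hz
end
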